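/- (Per-iteration bound for accelerated linearized ADMM.) Let γ > 0, η ≥ 1, let P be self-adjoint positive semidefinite on Y, and let Q be a self-adjoint operator on Z with ηγ·C*C ⪯ Q ⪯ ((μ_g + μ_h)/2)·I. Fix k ≥ 1 and set β_k = γ_k = (k+1)γ, Pᵏ = P/(k+1), Qᵏ = (k+1)(Q − γ C*C) + L_h·I. Given yᵏ, zᵏ, λᵏ, suppose: there is a subgradient u of f at y^{k+1} with u − B*λᵏ + β_k B*(B y^{k+1} + C zᵏ − b) + Pᵏ(y^{k+1} − yᵏ) = 0; there is a subgradient v of g at z^{k+1} with v + ∇h(zᵏ) − C*λᵏ + β_k C*(B y^{k+1} + C z^{k+1} − b) + Qᵏ(z^{k+1} − zᵏ) = 0; and λ^{k+1} = λᵏ − γ_k(B y^{k+1} + C z^{k+1} − b). Then for every (y, z) with B y + C z = b and every λ ∈ H: F(y^{k+1}, z^{k+1}) − F(y, z) − ⟨λ, B y^{k+1} + C z^{k+1} − b⟩ ≤ −(1/(2γ(k+1)))[‖λ − λ^{k+1}‖² − ‖λ − λᵏ‖²] − ((η−1)/(2ηγ(k+1)))‖λᵏ − λ^{k+1}‖²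 − (1/(2(k+1)))[‖y^{k+1} − y‖²_P − ‖yᵏ − y‖²_P + ‖y^{k+1} − yᵏ‖²_P] − ½((k+1)‖z^{k+1} − z‖²_Q + (L_h + μ_g)‖z^{k+1} − z‖²) + ½((k+1)‖zᵏ − z‖²_Q + (L_h − μ_h)‖zᵏ − z‖²). -/

import Mathlib

open scoped RealInnerProductSpace
open Set Filter Topology ContinuousLinearMap

/-!
Add the subgradient inequalities of `f` at `y^{k+1}` and of the `μ_g`-strongly convex `g` at
`z^{k+1}`, and the three-point inequality of `h` (strong convexity at `z^k` plus the descent lemma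
from `z^k` to `z^{k+1}`). The optimality conditions and `B y + C z = b` turn the resulting inner
products into cross terms `⟪T (x₁ - x₀), x₁ - w⟫`, each of which telescopes by the polarization
identity `2 ⟪T (x₁ - x₀), x₁ - w⟫ = ‖x₁ - w‖²_T - ‖x₀ - w‖²_T + ‖x₁ - x₀‖²_T`. The one term left,
`⟪C (z^{k+1} - z^k), λ^k - λ^{k+1}⟫`, is absorbed by Young's inequality with weight `ηγ(k+1)`
and `ηγ C*C ⪯ Q`; this uses up the `‖z^{k+1} - z^k‖²_Q` term and a `1/η` fraction of
`‖λ^k - λ^{k+1}‖²`.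
-/

section Convexity

variable {E : Type*} [NormedAddCommGroup E] [InnerProductSpace ℝ E] {φ : E → ℝ} {μ : ℝ}

theorem HasGradientAt.hasDerivAt_comp_add_smul [CompleteSpace E] {g x d : E} {t : ℝ}
    (hg : HasGradientAt φ g (x + t • d)) :
    HasDerivAt (fun s : ℝ => φ (x + s • d)) ⟪g, d⟫ t := by
  have hline : HasDerivAt (fun s : ℝ => x + s • d) d t := by
    simpa using ((hasDerivAt_id t).smul_const d).const_add x
  simpa [Function.comp_def] using (hasGradientAt_iff_hasFDerivAt.mp hg).comp_hasDerivAt t hline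

theorem StrongConvexOn.slope_add_le (hφ : StrongConvexOn univ μ φ) (x z : E) {t : ℝ}
    (ht₀ : 0 < t) (ht₁ : t ≤ 1) :
    t⁻¹ * (φ (x + t • (z - x)) - φ x) + (1 - t) * (μ / 2 * ‖x - z‖ ^ 2) ≤ φ z - φ x := by
  have h := hφ.2 (mem_univ x) (mem_univ z) (sub_nonneg.2 ht₁) ht₀.le (sub_add_cancel 1 t)
  rw [show (1 - t) • x + t • z = x + t • (z - x) by module, smul_eq_mul, smul_eq_mul] at h
  calc t⁻¹ * (φ (x + t • (z - x)) - φ x) + (1 - t) * (μ / 2 * ‖x - z‖ ^ 2)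
      = t⁻¹ * (φ (x + t • (z - x)) - φ x + t * (1 - t) * (μ / 2 * ‖x - z‖ ^ 2)) := by
        field_simp
    _ ≤ t⁻¹ * (t * (φ z - φ x)) := by gcongr; linarith
    _ = φ z - φ x := inv_mul_cancel_left₀ ht₀.ne' _

theorem StrongConvexOn.add_add_le_of_tendsto_le_slope (hφ : StrongConvexOn univ μ φ)
    {x z : E} {a : ℝ → ℝ} {ℓ : ℝ} (ha : Tendsto a (𝓝[>] 0) (𝓝 ℓ))
    (ha_le : ∀ᶠ t in 𝓝[>] 0, a t ≤ t⁻¹ * (φ (x + t • (z - x)) - φ x)) :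
    φ x + ℓ + μ / 2 * ‖x - z‖ ^ 2 ≤ φ z := by
  have hlim : Tendsto (fun t => a t + (1 - t) * (μ / 2 * ‖x - z‖ ^ 2)) (𝓝[>] 0)
      (𝓝 (ℓ + μ / 2 * ‖x - z‖ ^ 2)) := by
    have hc : Tendsto (fun t : ℝ => (1 - t) * (μ / 2 * ‖x - z‖ ^ 2)) (𝓝 0)
        (𝓝 (μ / 2 * ‖x - z‖ ^ 2)) :=
      (by fun_prop : Continuous fun t : ℝ => (1 - t) * (μ / 2 * ‖x - z‖ ^ 2)).tendsto' _ _
        (by simp)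
    exact ha.add (hc.mono_left nhdsWithin_le_nhds)
  have hev : ∀ᶠ t in 𝓝[>] 0, a t + (1 - t) * (μ / 2 * ‖x - z‖ ^ 2) ≤ φ z - φ x := by
    filter_upwards [ha_le, Ioc_mem_nhdsGT one_pos] with t hat ⟨ht₀, ht₁⟩
    linarith [hφ.slope_add_le x z ht₀ ht₁]
  linarith [le_of_tendsto hlim hev]

theorem StrongConvexOn.add_inner_add_le_of_subgradient (hφ : StrongConvexOn univ μ φ) {x v : E}
    (hv : ∀ z, φ x + ⟪v, z - x⟫ ≤ φ z) (z : E) :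
    φ x + ⟪v, z - x⟫ + μ / 2 * ‖x - z‖ ^ 2 ≤ φ z := by
  refine hφ.add_add_le_of_tendsto_le_slope tendsto_const_nhds ?_
  filter_upwards [self_mem_nhdsWithin] with t (ht : 0 < t)
  have := hv (x + t • (z - x))
  rw [add_sub_cancel_left, real_inner_smul_right] at this
  rw [le_inv_mul_iff₀ ht]
  linarith

theorem StrongConvexOn.add_inner_add_le_of_hasGradientAt [CompleteSpace E]
    (hφ : StrongConvexOn univ μ φ) {x g : E} (hg : HasGradientAt φ g x) (z : E) :
    φ x + ⟪g, z - x⟫ + μ / 2 * ‖x - z‖ ^ 2 ≤ φ z := by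
  have hslope := (HasGradientAt.hasDerivAt_comp_add_smul (d := z - x) (t := 0)
    (by simpa using hg)).tendsto_slope_zero_right
  simp only [zero_add, zero_smul, add_zero, smul_eq_mul] at hslope
  exact hφ.add_add_le_of_tendsto_le_slope hslope (Eventually.of_forall fun _ => le_rfl)

theorem le_add_inner_add_of_lipschitz_gradient [CompleteSpace E] {φ' : E → E} {L : ℝ}
    (hg : ∀ p, HasGradientAt φ (φ' p) p) (hlip : ∀ p q, ‖φ' p - φ' q‖ ≤ L * ‖p - q‖) (x z : E) :
    φ z ≤ φ x + ⟪φ' x, z - x⟫ + L / 2 * ‖z - x‖ ^ 2 := by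
  set d := z - x
  set χ : ℝ → ℝ := fun t => φ (x + t • d) - t * ⟪φ' x, d⟫ - L / 2 * t ^ 2 * ‖d‖ ^ 2
  have hχ : ∀ t, HasDerivAt χ (⟪φ' (x + t • d), d⟫ - ⟪φ' x, d⟫ - L * t * ‖d‖ ^ 2) t := by
    intro t
    refine ((((hg (x + t • d)).hasDerivAt_comp_add_smul).sub
      ((hasDerivAt_id t).mul_const ⟪φ' x, d⟫)).sub
      (((hasDerivAt_pow 2 t).const_mul (L / 2)).mul_const (‖d‖ ^ 2))).congr_deriv ?_
    simp only [Nat.cast_ofNat, Nat.add_one_sub_one, pow_one, one_mul]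
    ring
  obtain ⟨c, ⟨hc₀, -⟩, hc⟩ := exists_hasDerivAt_eq_slope χ _ one_pos
    (fun t _ => (hχ t).continuousAt.continuousWithinAt) (fun t _ => hχ t)
  have hdecr : ⟪φ' (x + c • d), d⟫ - ⟪φ' x, d⟫ ≤ L * c * ‖d‖ ^ 2 := by
    calc ⟪φ' (x + c • d), d⟫ - ⟪φ' x, d⟫ = ⟪φ' (x + c • d) - φ' x, d⟫ := (inner_sub_left ..).symm
      _ ≤ ‖φ' (x + c • d) - φ' x‖ * ‖d‖ := real_inner_le_norm _ _
      _ ≤ L * ‖c • d‖ * ‖d‖ := by gcongr; simpa using hlip (x + c • d) x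
      _ = L * c * ‖d‖ ^ 2 := by rw [norm_smul, Real.norm_of_nonneg hc₀.le]; ring
  have : χ 1 ≤ χ 0 := by rw [sub_zero, div_one] at hc; linarith
  simp only [χ, d, one_smul, add_sub_cancel, zero_smul, add_zero] at this
  linarith

theorem StrongConvexOn.add_inner_add_le_of_lipschitz_gradient [CompleteSpace E] {φ' : E → E}
    {L : ℝ} (hφ : StrongConvexOn univ μ φ) (hg : ∀ p, HasGradientAt φ (φ' p) p)
    (hlip : ∀ p q, ‖φ' p - φ' q‖ ≤ L * ‖p - q‖) (x z₁ z : E) :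
    φ z₁ + ⟪φ' x, z - z₁⟫ + μ / 2 * ‖x - z‖ ^ 2 ≤ φ z + L / 2 * ‖z₁ - x‖ ^ 2 := by
  have hlower := hφ.add_inner_add_le_of_hasGradientAt (hg x) z
  have hupper := le_add_inner_add_of_lipschitz_gradient hg hlip x z₁
  have hsplit : ⟪φ' x, z - z₁⟫ = ⟪φ' x, z - x⟫ - ⟪φ' x, z₁ - x⟫ := by
    rw [← inner_sub_right, sub_sub_sub_cancel_right]
  linarith

end Convexity

section InnerProduct

variable {E : Type*} [NormedAddCommGroup E] [InnerProductSpace ℝ E]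

theorem LinearMap.IsSymmetric.two_mul_inner_map_sub {T : E →ₗ[ℝ] E} (hT : T.IsSymmetric)
    (x y w : E) :
    2 * ⟪T (x - y), x - w⟫ = ⟪x - w, T (x - w)⟫ - ⟪y - w, T (y - w)⟫ + ⟪x - y, T (x - y)⟫ := by
  have key : ∀ a b : E, 2 * ⟪T (a - b), a⟫ = ⟪a, T a⟫ - ⟪b, T b⟫ + ⟪a - b, T (a - b)⟫ := by
    intro a b
    simp only [map_sub, inner_sub_left, inner_sub_right]
    linarith [hT b a, real_inner_comm a (T a), real_inner_comm a (T b)]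
  simpa only [sub_sub_sub_cancel_right] using key (x - w) (y - w)

theorem two_mul_inner_sub_sub (x y w : E) :
    2 * ⟪x - y, x - w⟫ = ‖x - w‖ ^ 2 - ‖y - w‖ ^ 2 + ‖x - y‖ ^ 2 := by
  simpa only [LinearMap.id_apply, real_inner_self_eq_norm_sq] using
    LinearMap.IsSymmetric.id.two_mul_inner_map_sub x y w

theorem real_inner_le_mul_norm_sq_add {c : ℝ} (hc : 0 < c) (a b : E) :
    ⟪a, b⟫ ≤ c / 2 * ‖a‖ ^ 2 + 1 / (2 * c) * ‖b‖ ^ 2 := by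
  have h : 0 ≤ ‖c • a - b‖ ^ 2 := sq_nonneg _
  rw [norm_sub_sq_real, norm_smul, real_inner_smul_left, Real.norm_of_nonneg hc.le] at h
  have key : 2 * c * ⟪a, b⟫ ≤ 2 * c * (c / 2 * ‖a‖ ^ 2 + 1 / (2 * c) * ‖b‖ ^ 2) := by
    field_simp
    nlinarith
  exact le_of_mul_le_mul_left key (by positivity)

theorem inner_sub_inner_sub_mul_norm_sq_of_sub_eq_smul {p₀ p₁ r : E} {β : ℝ} (hβ : β ≠ 0)
    (h : p₀ - p₁ = β • r) (p : E) :
    ⟪p₀, r⟫ - ⟪p, r⟫ - β * ‖r‖ ^ 2 = (‖p - p₀‖ ^ 2 - ‖p - p₁‖ ^ 2 - ‖p₀ - p₁‖ ^ 2) / (2 * β) := by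
  rw [← inner_sub_left]
  have hr : r = β⁻¹ • (p₀ - p₁) := by rw [h, smul_smul, inv_mul_cancel₀ hβ, one_smul]
  have hpol := two_mul_inner_sub_sub p₀ p₁ p
  rw [norm_sub_rev p₀ p, norm_sub_rev p₁ p] at hpol
  rw [hr, real_inner_smul_right, norm_smul, mul_pow, Real.norm_eq_abs, sq_abs, real_inner_comm]
  field_simp
  linarith

end InnerProduct

section Optimality

variable {Y Z H : Type*}
  [NormedAddCommGroup Y] [InnerProductSpace ℝ Y] [CompleteSpace Y]
  [NormedAddCommGroup Z] [InnerProductSpace ℝ Z] [CompleteSpace Z]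
  [NormedAddCommGroup H] [InnerProductSpace ℝ H] [CompleteSpace H]

theorem inner_add_inner_add_inner_eq_of_optimality {B : Y →L[ℝ] H} {C : Z →L[ℝ] H} {b : H}
    {P : Y →L[ℝ] Y} {Q : Z →L[ℝ] Z} {κ γ L : ℝ} {y y₀ y₁ u : Y} {z z₀ z₁ v w : Z} {ν : H}
    (hfeas : B y + C z = b)
    (hu : u - adjoint B ν + (κ * γ) • adjoint B (B y₁ + C z₀ - b) + (κ⁻¹ • P) (y₁ - y₀) = 0)
    (hv : v + w - adjoint C ν + (κ * γ) • adjoint C (B y₁ + C z₁ - b)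
      + ((κ • (Q - γ • (adjoint C).comp C) + L • ContinuousLinearMap.id ℝ Z) (z₁ - z₀)) = 0) :
    ⟪u, y - y₁⟫ + ⟪v, z - z₁⟫ + ⟪w, z - z₁⟫
      = κ⁻¹ * ⟪P (y₁ - y₀), y₁ - y⟫ + κ * ⟪Q (z₁ - z₀), z₁ - z⟫ + L * ⟪z₁ - z₀, z₁ - z⟫
        + κ * γ * ‖B y₁ + C z₁ - b‖ ^ 2 - κ * γ * ⟪C (z₁ - z₀), B y₁ + C z₁ - b⟫
        - ⟪ν, B y₁ + C z₁ - b⟫ := by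
  set r := B y₁ + C z₁ - b
  set ξ := ν - (κ * γ) • (r - C (z₁ - z₀))
  have hu' : u = adjoint B ξ - κ⁻¹ • P (y₁ - y₀) := by
    simp only [ξ, r, map_sub, map_smul, map_add, smul_apply] at hu ⊢
    linear_combination (norm := module) hu
  have hw' : v + w = adjoint C ξ - κ • Q (z₁ - z₀) - L • (z₁ - z₀) := by
    simp only [ξ, r, map_sub, map_smul, map_add, add_apply, smul_apply, sub_apply, comp_apply,
      coe_id', id_eq] at hv ⊢
    linear_combination (norm := module) hv
  have hr : B (y₁ - y) + C (z₁ - z) = r := by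
    simp only [r, map_sub, ← hfeas]; abel
  calc ⟪u, y - y₁⟫ + ⟪v, z - z₁⟫ + ⟪w, z - z₁⟫
      = -⟪u, y₁ - y⟫ - ⟪v + w, z₁ - z⟫ := by
        rw [← neg_sub y₁ y, ← neg_sub z₁ z, inner_neg_right, inner_neg_right, inner_neg_right,
          inner_add_left]
        ring
    _ = κ⁻¹ * ⟪P (y₁ - y₀), y₁ - y⟫ + κ * ⟪Q (z₁ - z₀), z₁ - z⟫ + L * ⟪z₁ - z₀, z₁ - z⟫
        - ⟪ξ, B (y₁ - y) + C (z₁ - z)⟫ := by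
        rw [hu', hw']
        simp only [inner_sub_left, real_inner_smul_left, adjoint_inner_left, inner_add_right]
        ring
    _ = _ := by
        rw [hr]
        simp only [ξ, inner_sub_left, real_inner_smul_left, real_inner_self_eq_norm_sq]
        ring

end Optimality

theorem stmt_13_general {Y Z H : Type*}
    [NormedAddCommGroup Y] [InnerProductSpace ℝ Y] [FiniteDimensional ℝ Y]
    [NormedAddCommGroup Z] [InnerProductSpace ℝ Z] [FiniteDimensional ℝ Z]
    [NormedAddCommGroup H] [InnerProductSpace ℝ H] [FiniteDimensional ℝ H]
    (B : Y →L[ℝ] H) (C : Z →L[ℝ] H) (b : H)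
    (f : Y → ℝ)
    (g : Z → ℝ) (μg : ℝ)
    (hg : ConvexOn ℝ Set.univ (fun z => g z - μg / 2 * ‖z‖ ^ 2))
    (h : Z → ℝ) (h' : Z → Z) (Lh μh : ℝ)
    (hh : ConvexOn ℝ Set.univ (fun z => h z - μh / 2 * ‖z‖ ^ 2))
    (hgrad : ∀ z : Z, HasGradientAt h (h' z) z)
    (hlip : ∀ z z' : Z, ‖h' z - h' z'‖ ≤ Lh * ‖z - z'‖)
    (γ η : ℝ) (hγ : 0 < γ) (hη : 1 ≤ η)
    (P : Y →L[ℝ] Y) (hP : IsSelfAdjoint P)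
    (Q : Z →L[ℝ] Z) (hQ : IsSelfAdjoint Q)
    (hQlow : ∀ v : Z, η * γ * ‖C v‖ ^ 2 ≤ ⟪v, Q v⟫)
    (k : ℕ)
    (yk : Y) (zk : Z) (lamk : H) (yk1 : Y) (zk1 : Z) (lamk1 : H)
    (hopty : ∃ u : Y,
      (∀ y' : Y, f y' ≥ f yk1 + ⟪u, y' - yk1⟫) ∧
      u - (ContinuousLinearMap.adjoint B) lamk
        + (((k : ℝ) + 1) * γ) • (ContinuousLinearMap.adjoint B) (B yk1 + C zk - b)
        + (((k : ℝ) + 1)⁻¹ • P) (yk1 - yk) = 0)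
    (hoptz : ∃ v : Z,
      (∀ z' : Z, g z' ≥ g zk1 + ⟪v, z' - zk1⟫) ∧
      v + h' zk - (ContinuousLinearMap.adjoint C) lamk
        + (((k : ℝ) + 1) * γ) • (ContinuousLinearMap.adjoint C) (B yk1 + C zk1 - b)
        + ((((k : ℝ) + 1) • (Q - γ • ((ContinuousLinearMap.adjoint C).comp C))
            + Lh • ContinuousLinearMap.id ℝ Z) (zk1 - zk)) = 0)
    (hlam : lamk1 = lamk - (((k : ℝ) + 1) * γ) • (B yk1 + C zk1 - b)) :
    ∀ (y : Y) (z : Z), B y + C z = b → ∀ lam : H,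
      (f yk1 + g zk1 + h zk1) - (f y + g z + h z) - ⟪lam, B yk1 + C zk1 - b⟫
        ≤ -(1 / (2 * γ * ((k : ℝ) + 1))) * (‖lam - lamk1‖ ^ 2 - ‖lam - lamk‖ ^ 2)
          - ((η - 1) / (2 * η * γ * ((k : ℝ) + 1))) * ‖lamk - lamk1‖ ^ 2
          - (1 / (2 * ((k : ℝ) + 1))) * (⟪yk1 - y, P (yk1 - y)⟫ - ⟪yk - y, P (yk - y)⟫
              + ⟪yk1 - yk, P (yk1 - yk)⟫)
          - (1 / 2) * (((k : ℝ) + 1) * ⟪zk1 - z, Q (zk1 - z)⟫ + (Lh + μg) * ‖zk1 - z‖ ^ 2)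
          + (1 / 2) * (((k : ℝ) + 1) * ⟪zk - z, Q (zk - z)⟫ + (Lh - μh) * ‖zk - z‖ ^ 2) := by
  intro y z hfeas lam
  obtain ⟨u, hu, hu_opt⟩ := hopty
  obtain ⟨v, hv, hv_opt⟩ := hoptz
  have hκ : (0 : ℝ) < (k : ℝ) + 1 := by positivity
  -- With `κ` an atom, `ring` can split inverses such as `(2 * κ)⁻¹`; it cannot split `(2 * (k + 1))⁻¹`.
  generalize (k : ℝ) + 1 = κ at hκ hu_opt hv_opt hlam ⊢
  have hη₀ : 0 < η := by linarith
  have hΔ : lamk - lamk1 = (κ * γ) • (B yk1 + C zk1 - b) := by rw [hlam, sub_sub_cancel]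
  have hg_z := (strongConvexOn_iff_convex.mpr hg).add_inner_add_le_of_subgradient hv z
  have hh_z := (strongConvexOn_iff_convex.mpr hh).add_inner_add_le_of_lipschitz_gradient
    hgrad hlip zk zk1 z
  have hopt := inner_add_inner_add_inner_eq_of_optimality hfeas hu_opt hv_opt
  have hmult := inner_sub_inner_sub_mul_norm_sq_of_sub_eq_smul (by positivity) hΔ lam
  have hyoung := real_inner_le_mul_norm_sq_add (by positivity : 0 < η * γ * κ)
    (C (zk1 - zk)) (lamk - lamk1)
  have hcoupling : ⟪C (zk1 - zk), lamk - lamk1⟫ = κ * γ * ⟪C (zk1 - zk), B yk1 + C zk1 - b⟫ := by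
    rw [hΔ, real_inner_smul_right]
  have hP_pol := hP.isSymmetric.two_mul_inner_map_sub yk1 yk y
  have hQ_pol := hQ.isSymmetric.two_mul_inner_map_sub zk1 zk z
  have hL_pol := two_mul_inner_sub_sub zk1 zk z
  have hη_split : (η - 1) / (2 * η * γ * κ) = 1 / (2 * γ * κ) - 1 / (2 * (η * γ * κ)) := by
    field_simp
  simp only [ContinuousLinearMap.coe_coe] at hP_pol hQ_pol
  linear_combination hu y + hg_z + hh_z - hopt + hmult + hyoung - hcoupling
    + κ / 2 * hQlow (zk1 - zk) - κ⁻¹ / 2 * hP_pol - κ / 2 * hQ_pol - Lh / 2 * hL_pol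
    + ‖lamk - lamk1‖ ^ 2 * hη_split

/-- Per-iteration bound for the accelerated linearized ADMM
(Proposition 2.13 in the paper). -/
theorem stmt_13 {Y Z H : Type*}
    [NormedAddCommGroup Y] [InnerProductSpace ℝ Y] [FiniteDimensional ℝ Y]
    [NormedAddCommGroup Z] [InnerProductSpace ℝ Z] [FiniteDimensional ℝ Z]
    [NormedAddCommGroup H] [InnerProductSpace ℝ H] [FiniteDimensional ℝ H]
    (B : Y →L[ℝ] H) (C : Z →L[ℝ] H) (b : H)
    (f : Y → ℝ) (hf : ConvexOn ℝ Set.univ f)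
    (g : Z → ℝ) (μg : ℝ) (hμg : 0 ≤ μg)
    (hg : ConvexOn ℝ Set.univ (fun z => g z - μg / 2 * ‖z‖ ^ 2))
    (h : Z → ℝ) (h' : Z → Z) (Lh μh : ℝ) (hLh : 0 ≤ Lh) (hμh : 0 ≤ μh)
    (hh : ConvexOn ℝ Set.univ (fun z => h z - μh / 2 * ‖z‖ ^ 2))
    (hgrad : ∀ z : Z, HasGradientAt h (h' z) z)
    (hlip : ∀ z z' : Z, ‖h' z - h' z'‖ ≤ Lh * ‖z - z'‖)
    (hμ : 0 < μg + μh)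
    (γ η : ℝ) (hγ : 0 < γ) (hη : 1 ≤ η)
    (P : Y →L[ℝ] Y) (hP : IsSelfAdjoint P) (hPpsd : ∀ v : Y, 0 ≤ ⟪v, P v⟫)
    (Q : Z →L[ℝ] Z) (hQ : IsSelfAdjoint Q)
    (hQlow : ∀ v : Z, η * γ * ‖C v‖ ^ 2 ≤ ⟪v, Q v⟫)
    (hQup : ∀ v : Z, ⟪v, Q v⟫ ≤ (μg + μh) / 2 * ‖v‖ ^ 2)
    (k : ℕ) (hk : 1 ≤ k)
    (yk : Y) (zk : Z) (lamk : H) (yk1 : Y) (zk1 : Z) (lamk1 : H)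
    (hopty : ∃ u : Y,
      (∀ y' : Y, f y' ≥ f yk1 + ⟪u, y' - yk1⟫) ∧
      u - (ContinuousLinearMap.adjoint B) lamk
        + (((k : ℝ) + 1) * γ) • (ContinuousLinearMap.adjoint B) (B yk1 + C zk - b)
        + (((k : ℝ) + 1)⁻¹ • P) (yk1 - yk) = 0)
    (hoptz : ∃ v : Z,
      (∀ z' : Z, g z' ≥ g zk1 + ⟪v, z' - zk1⟫) ∧
      v + h' zk - (ContinuousLinearMap.adjoint C) lamk
        + (((k : ℝ) + 1) * γ) • (ContinuousLinearMap.adjoint C) (B yk1 + C zk1 - b)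
        + ((((k : ℝ) + 1) • (Q - γ • ((ContinuousLinearMap.adjoint C).comp C))
            + Lh • ContinuousLinearMap.id ℝ Z) (zk1 - zk)) = 0)
    (hlam : lamk1 = lamk - (((k : ℝ) + 1) * γ) • (B yk1 + C zk1 - b)) :
    ∀ (y : Y) (z : Z), B y + C z = b → ∀ lam : H,
      (f yk1 + g zk1 + h zk1) - (f y + g z + h z) - ⟪lam, B yk1 + C zk1 - b⟫
        ≤ -(1 / (2 * γ * ((k : ℝ) + 1))) * (‖lam - lamk1‖ ^ 2 - ‖lam - lamk‖ ^ 2)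
          - ((η - 1) / (2 * η * γ * ((k : ℝ) + 1))) * ‖lamk - lamk1‖ ^ 2
          - (1 / (2 * ((k : ℝ) + 1))) * (⟪yk1 - y, P (yk1 - y)⟫ - ⟪yk - y, P (yk - y)⟫
              + ⟪yk1 - yk, P (yk1 - yk)⟫)
          - (1 / 2) * (((k : ℝ) + 1) * ⟪zk1 - z, Q (zk1 - z)⟫ + (Lh + μg) * ‖zk1 - z‖ ^ 2)
          + (1 / 2) * (((k : ℝ) + 1) * ⟪zk - z, Q (zk - z)⟫ + (Lh - μh) * ‖zk - z‖ ^ 2) :=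
  stmt_13_general B C b f g μg hg h h' Lh μh hh hgrad hlip γ η hγ hη P hP Q hQ hQlow k yk zk lamk
    yk1 zk1 lamk1 hopty hoptz hlam
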